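/- arXiv:2102.13531 — 2 statements merged into one kernel-verified Lean document; each statement's English description precedes it below -/
import Mathlib

section
/- Let δ be a limit ordinal, let α be an ordinal, let (γ_ι : ι < δ) be a sequence of ordinals with γ_ι < α for every ι < δ, and let ρ and η be arbitrary ordinals. Then liminf_{ι<δ} (α^(η+2)·ρ + α^η·γ_ι) = α^(η+2)·ρ + α^η·(liminf_{ι<δ} γ_ι), where all arithmetic operations are ordinal addition, multiplication and exponentiation. -/
open Ordinal

/-- The inferior limit of `f` along a limit ordinal `δ`:
`liminf_{ι<δ} f(ι) = sup_{ξ<δ} inf { f(ι) : ξ ≤ ι < δ }`. -/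
noncomputable def ordLimInf (δ : Ordinal) (f : Ordinal → Ordinal) : Ordinal :=
  ⨆ ξ : Set.Iio δ, sInf (f '' Set.Ico ξ.1 δ)

universe u v

/-! The map `x ↦ α ^ (η + 2) * ρ + α ^ η * x` is normal. A normal function commutes with
suprema of bounded families, and, being monotone, with infima of nonempty sets of ordinals
(which are attained); the liminf is a supremum of such infima. -/

theorem Order.IsNormal.map_ordLimInf {f : Ordinal.{v} → Ordinal.{v}} (hf : Order.IsNormal f)
    {δ : Ordinal.{u}} (hδ : 0 < δ) {γ : Ordinal.{u} → Ordinal.{v}}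
    (hγ : BddAbove (γ '' Set.Iio δ)) :
    ordLimInf δ (fun ι => f (γ ι)) = f (ordLimInf δ γ) := by
  have : Nonempty (Set.Iio δ) := ⟨⟨0, hδ⟩⟩
  have hmem (ξ : Set.Iio δ) : γ ξ ∈ γ '' Set.Ico ξ.1 δ :=
    Set.mem_image_of_mem γ (Set.left_mem_Ico.2 ξ.2)
  have hbdd : BddAbove (Set.range fun ξ : Set.Iio δ => sInf (γ '' Set.Ico ξ.1 δ)) := by
    obtain ⟨b, hb⟩ := hγ
    refine ⟨b, ?_⟩
    rintro _ ⟨ξ, rfl⟩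
    exact (csInf_le' (hmem ξ)).trans (hb ⟨ξ, ξ.2, rfl⟩)
  unfold ordLimInf
  rw [hf.map_iSup hbdd]
  congr 1 with ξ
  rw [hf.monotone.map_csInf ⟨_, hmem ξ⟩, ← Set.image_comp]
  rfl

theorem liminf_cnf (δ α : Ordinal) (hδ : Order.IsSuccLimit δ) (γ : Ordinal → Ordinal)
    (hγ : ∀ ι < δ, γ ι < α) (ρ η : Ordinal) :
    ordLimInf δ (fun ι => α ^ (η + 2) * ρ + α ^ η * γ ι) =
      α ^ (η + 2) * ρ + α ^ η * ordLimInf δ γ := by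
  have hα : 0 < α := (hγ 0 hδ.pos).pos
  have hbdd : BddAbove (γ '' Set.Iio δ) :=
    ⟨α, Set.forall_mem_image.2 fun ι hι => (hγ ι hι).le⟩
  exact ((isNormal_add_right _).comp (isNormal_mul_right (opow_pos η hα))).map_ordLimInf
    hδ.pos hbdd
end

section
/- Let δ be a limit ordinal, let α be an ordinal, let (γ_ι : ι < δ) be a sequence of ordinals with γ_ι < α for every ι < δ, and let ρ and η be arbitrary ordinals. If liminf_{ι<δ} γ_ι = α (a 'register overflow' at the limit stage), then liminf_{ι<δ} (α^(η+2)·ρ + α^η·γ_ι) = α^(η+2)·ρ + α^(η+1). -/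
open Ordinal

/-!
The map `x ↦ α^(η+2)·ρ + α^η·x` is monotone, and it is either constant or normal, so it
commutes with every infimum (which, among ordinals, is a minimum) and every bounded nonempty
supremum in the definition of the inferior limit. Hence the inferior limit of the registers is
this map applied to `liminf γ = α`, and `α^η·α = α^(η+1)`.
-/

-- `Set.Iio δ` may live in a higher universe than the values of `f`, so without this bound the
-- supremum in `ordLimInf` can be the junk value `0`.
theorem bddAbove_range_sInf_image_Ico {δ : Ordinal} {f : Ordinal → Ordinal}
    (hf : BddAbove (f '' Set.Iio δ)) :
    BddAbove (Set.range fun ξ : Set.Iio δ => sInf (f '' Set.Ico ξ.1 δ)) := by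
  obtain ⟨a, ha⟩ := hf
  refine ⟨a, Set.forall_mem_range.2 fun ξ => ?_⟩
  exact (csInf_le' (Set.mem_image_of_mem f (Set.left_mem_Ico.2 ξ.2))).trans
    (ha (Set.mem_image_of_mem f ξ.2))

theorem ordLimInf_comp_of_monotone {δ : Ordinal} {g : Ordinal → Ordinal} (hg : Monotone g)
    (hsup : ∀ x : Set.Iio δ → Ordinal, BddAbove (Set.range x) → g (⨆ ξ, x ξ) = ⨆ ξ, g (x ξ))
    {f : Ordinal → Ordinal} (hf : BddAbove (f '' Set.Iio δ)) :
    ordLimInf δ (g ∘ f) = g (ordLimInf δ f) := by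
  have hinf (ξ : Set.Iio δ) : sInf ((g ∘ f) '' Set.Ico ξ.1 δ) = g (sInf (f '' Set.Ico ξ.1 δ)) := by
    rw [Set.image_comp, hg.map_csInf (Set.nonempty_Ico.2 ξ.2 |>.image f)]
  simp only [ordLimInf, hinf, hsup _ (bddAbove_range_sInf_image_Ico hf)]

theorem ordLimInf_add_mul {δ : Ordinal} (hδ : δ ≠ 0) (c b : Ordinal) {f : Ordinal → Ordinal}
    (hf : BddAbove (f '' Set.Iio δ)) :
    ordLimInf δ (fun ι => c + b * f ι) = c + b * ordLimInf δ f := by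
  have : Nonempty (Set.Iio δ) := ⟨⟨0, pos_iff_ne_zero.2 hδ⟩⟩
  refine ordLimInf_comp_of_monotone (g := fun x => c + b * x)
    (fun _ _ h => add_le_add_right (mul_le_mul_right h b) c) (fun x hx => ?_) hf
  rcases eq_zero_or_pos b with rfl | hb
  · simp
  · exact ((isNormal_add_right c).comp (isNormal_mul_right hb)).map_iSup hx

theorem liminf_cnf_overflow (δ α : Ordinal) (hδ : Order.IsSuccLimit δ) (γ : Ordinal → Ordinal)
    (hγ : ∀ ι < δ, γ ι < α) (ρ η : Ordinal) (hover : ordLimInf δ γ = α) :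
    ordLimInf δ (fun ι => α ^ (η + 2) * ρ + α ^ η * γ ι) =
      α ^ (η + 2) * ρ + α ^ (η + 1) := by
  have hbdd : BddAbove (γ '' Set.Iio δ) := ⟨α, Set.forall_mem_image.2 fun ι hι => (hγ ι hι).le⟩
  rw [ordLimInf_add_mul hδ.ne_bot _ _ hbdd, hover, ← opow_succ, Order.succ_eq_add_one]
end
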